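/- arXiv:2406.10780 — 6 statements merged into one kernel-verified Lean document; each statement's English description precedes it below -/
import Mathlib

section
/- If G is a graph with treewidth at most 2 and σ is any signature on E(G), then the graph whose vertex set is V(G) and whose edges are all pairs {x,y} such that either xy ∈ E(G), or d_G(x,y) = 2 and some xy-path of length 2 has negative sign product, has chromatic number at most 7. -/
open SimpleGraph

/-- The number of negative edges of a walk, where `σ e = true` means edge `e` is negative. -/
def negCount {V : Type} {G : SimpleGraph V} (σ : Sym2 V → Bool) {x y : V}
    (p : G.Walk x y) : ℕ :=
  (p.edges.filter (fun e => σ e)).length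

/-- A walk is negative if it contains an odd number of negative edges. -/
def IsNegWalk {V : Type} {G : SimpleGraph V} (σ : Sym2 V → Bool) {x y : V}
    (p : G.Walk x y) : Prop :=
  Odd (negCount σ p)

/-- The exact-distance `-k` graph of the signed graph `(G, σ)`:
`xy` is an edge iff `d_G(x,y) = k` and every `xy`-path of length `k` is negative. -/
def exactDistNeg {V : Type} (G : SimpleGraph V) (σ : Sym2 V → Bool) (k : ℕ) :
    SimpleGraph V :=
  SimpleGraph.fromRel (fun x y =>
    G.dist x y = k ∧ ∀ p : G.Walk x y, p.IsPath → p.length = k → IsNegWalk σ p)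

/-- The strong exact-distance `-k` graph of the signed graph `(G, σ)`:
`xy` is an edge iff `d_G(x,y) = k` and some `xy`-path of length `k` is negative. -/
def strongExactDistNeg {V : Type} (G : SimpleGraph V) (σ : Sym2 V → Bool) (k : ℕ) :
    SimpleGraph V :=
  SimpleGraph.fromRel (fun x y =>
    G.dist x y = k ∧ ∃ p : G.Walk x y, p.IsPath ∧ p.length = k ∧ IsNegWalk σ p)

/-- `WReach G L k y` : the set of vertices weakly `k`-reachable from `y` w.r.t. ordering `L`. -/
def WReach {V : Type} (G : SimpleGraph V) (L : LinearOrder V) (k : ℕ) (y : V) : Set V :=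
  {x | ∃ p : G.Walk x y, p.IsPath ∧ p.length ≤ k ∧ ∀ z ∈ p.support, L.le x z}

/-- The weak `k`-colouring number of `G`. -/
noncomputable def wcol {V : Type} (G : SimpleGraph V) (k : ℕ) : ℕ :=
  ⨅ L : LinearOrder V, ⨆ y : V, (WReach G L k y).ncard

/-- `DReach G L k y` : the set of vertices `x` such that there is an `xy`-path
`z_0, …, z_s` (`x = z_0`, `y = z_s`) of length `s ≤ k` on which `x` is the `L`-minimum
and `y ≤_L z_i` for all `⌊k/2⌋ + 1 ≤ i ≤ s`. -/
def DReach {V : Type} (G : SimpleGraph V) (L : LinearOrder V) (k : ℕ) (y : V) : Set V :=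
  {x | ∃ p : G.Walk x y, p.IsPath ∧ p.length ≤ k ∧ (∀ z ∈ p.support, L.le x z) ∧
        ∀ i, k / 2 + 1 ≤ i → i ≤ p.length → L.le y (p.support.getD i y)}

/-- The distance-`k`-colouring number of `G`. -/
noncomputable def dcol {V : Type} (G : SimpleGraph V) (k : ℕ) : ℕ :=
  ⨅ L : LinearOrder V, ⨆ y : V, (DReach G L k y).ncard

/-- `SReach G L k y` : the set of vertices strongly `k`-reachable from `y` w.r.t. `L`. -/
def SReach {V : Type} (G : SimpleGraph V) (L : LinearOrder V) (k : ℕ) (y : V) : Set V :=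
  {x | ∃ p : G.Walk x y, p.IsPath ∧ p.length ≤ k ∧ (∀ z ∈ p.support, L.le x z) ∧
        ∀ z ∈ p.support, z ≠ x → L.le y z}

/-- The strong `k`-colouring number of `G`. -/
noncomputable def scol {V : Type} (G : SimpleGraph V) (k : ℕ) : ℕ :=
  ⨅ L : LinearOrder V, ⨆ y : V, (SReach G L k y).ncard

/-- `H` is a minor of `G` (branch-set definition). -/
def IsMinor {W V : Type} (H : SimpleGraph W) (G : SimpleGraph V) : Prop :=
  ∃ B : W → Set V,
    (∀ w, (B w).Nonempty) ∧
    (∀ w, (G.induce (B w)).Connected) ∧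
    (Pairwise (Function.onFun Disjoint B)) ∧
    ∀ w w', H.Adj w w' → ∃ u ∈ B w, ∃ v ∈ B w', G.Adj u v

/-- `G` is planar iff it has no `K₅` and no `K₃,₃` minor (Wagner's theorem). -/
def IsPlanar {V : Type} (G : SimpleGraph V) : Prop :=
  ¬ IsMinor (completeGraph (Fin 5)) G ∧
  ¬ IsMinor (completeBipartiteGraph (Fin 3) (Fin 3)) G

/-- `G` is outerplanar iff it has no `K₄` and no `K₂,₃` minor. -/
def IsOuterplanar {V : Type} (G : SimpleGraph V) : Prop :=
  ¬ IsMinor (completeGraph (Fin 4)) G ∧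
  ¬ IsMinor (completeBipartiteGraph (Fin 2) (Fin 3)) G

/-- `G` has treewidth at most `t` (tree-decomposition definition). -/
def HasTreewidthLE {V : Type} (G : SimpleGraph V) (t : ℕ) : Prop :=
  ∃ (ι : Type) (T : SimpleGraph ι) (B : ι → Finset V),
    T.Connected ∧ T.IsAcyclic ∧
    (∀ v, ∃ i, v ∈ B i) ∧
    (∀ u v, G.Adj u v → ∃ i, u ∈ B i ∧ v ∈ B i) ∧
    (∀ v, (T.induce {i | v ∈ B i}).Connected) ∧
    (∀ i, (B i).card ≤ t + 1)

/-!
A graph of treewidth at most 2 lies in a graph `H` in which every nonempty finite vertex set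
contains a vertex whose neighbours in the set form a clique of at most two vertices: root the tree
decomposition and take a vertex whose highest bag is as deep as possible. Eliminating vertices in
this order, we colour from `Fin 7` and give each vertex `v` a partition of the other six colours
into two classes, one reserved for the colours of the neighbours of `v` across positive edges and
one for those across negative edges. Up to relabelling the colours, the data at the two ends of an
edge of sign `s` is one fixed canonical pair, and in that canonical configuration one checks that a
new vertex attached to an edge, with any two signs, can again be given such data. A negative path of
length two turns at a vertex whose two edges have different signs, so its ends get colours from
the two disjoint classes of the middle vertex.
-/

open Finset

namespace SimpleGraph

section Tree

variable {ι : Type*} {T : SimpleGraph ι}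

lemma Walk.IsPath.append_of_support_inter {u v w : ι} {p : T.Walk u v} {q : T.Walk v w}
    (hp : p.IsPath) (hq : q.IsPath) (h : ∀ x ∈ p.support, x ∈ q.support → x = v) :
    (p.append q).IsPath := by
  rw [Walk.isPath_def, Walk.support_append]
  refine hp.support_nodup.append hq.support_nodup.tail fun x hxp hxq => ?_
  obtain rfl := h x hxp (List.mem_of_mem_tail hxq)
  have hnodup := hq.support_nodup
  rw [← q.cons_tail_support] at hnodup
  exact (List.nodup_cons.mp hnodup).1 hxq

lemma Walk.dist_lt_of_mem_support {u v x : ι} {p : T.Walk u v} (hp : p.length = T.dist u v)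
    (hx : x ∈ p.support) (hxv : x ≠ v) : T.dist u x < T.dist u v := by
  classical
  have hsplit := congrArg Walk.length (p.take_spec hx)
  rw [Walk.length_append] at hsplit
  have hfst : T.dist u x ≤ (p.takeUntil x hx).length := dist_le _
  have hsnd : (p.dropUntil x hx).length ≠ 0 := fun h => hxv (Walk.eq_of_length_eq_zero h)
  omega

lemma IsAcyclic.eq_of_isPath (hT : T.IsAcyclic) {u v : ι} {p q : T.Walk u v} (hp : p.IsPath)
    (hq : q.IsPath) : p = q :=
  congrArg Subtype.val ((hT.subsingleton_path u v).elim ⟨p, hp⟩ ⟨q, hq⟩)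

lemma IsAcyclic.length_eq_dist (hT : T.IsAcyclic) {u v : ι} {p : T.Walk u v} (hp : p.IsPath) :
    p.length = T.dist u v := by
  obtain ⟨q, hq, hlen⟩ := p.reachable.exists_path_of_dist
  rw [hT.eq_of_isPath hp hq, hlen]

lemma Connected.exists_isPath_support_subset {K : Set ι} (hK : (T.induce K).Connected)
    {i j : ι} (hi : i ∈ K) (hj : j ∈ K) :
    ∃ p : T.Walk i j, p.IsPath ∧ ∀ x ∈ p.support, x ∈ K := by
  classical
  obtain ⟨q⟩ := hK.preconnected ⟨i, hi⟩ ⟨j, hj⟩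
  let p := q.map (Embedding.induce K).toHom
  refine ⟨p.bypass, p.bypass_isPath, fun x hx => ?_⟩
  have hx' : x ∈ p.support := p.support_bypass_subset_support hx
  rw [Walk.support_map] at hx'
  obtain ⟨y, -, rfl⟩ := List.mem_map.mp hx'
  exact y.2

lemma IsAcyclic.support_subset_of_isPath (hT : T.IsAcyclic) {K : Set ι}
    (hK : (T.induce K).Connected) {i j : ι} (hi : i ∈ K) (hj : j ∈ K) {p : T.Walk i j}
    (hp : p.IsPath) : ∀ x ∈ p.support, x ∈ K := by
  obtain ⟨q, hq, hqK⟩ := hK.exists_isPath_support_subset hi hj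
  rwa [hT.eq_of_isPath hp hq]

lemma IsAcyclic.mem_support_of_forall_dist_le (hT : T.IsAcyclic) {K : Set ι}
    (hK : (T.induce K).Connected) {r a j : ι} (ha : a ∈ K)
    (hmin : ∀ k ∈ K, T.dist r a ≤ T.dist r k) (hj : j ∈ K) {p : T.Walk r j} (hp : p.IsPath) :
    a ∈ p.support := by
  obtain ⟨q, hq, hqK⟩ := hK.exists_isPath_support_subset ha hj
  obtain ⟨p', hp', hlen⟩ := (p.reachable.trans q.reachable.symm).exists_path_of_dist
  have happ : (p'.append q).IsPath := hp'.append_of_support_inter hq fun x hx hxq => by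
    by_contra hxa
    exact (hmin x (hqK x hxq)).not_gt (Walk.dist_lt_of_mem_support hlen hx hxa)
  rw [hT.eq_of_isPath hp happ]
  exact (p'.mem_support_append_iff q).2 (Or.inl p'.end_mem_support)

variable {V : Type*} {B : ι → Set V}

lemma mem_bag_of_dist_le (hc : T.Connected) (hT : T.IsAcyclic)
    (hB : ∀ v, (T.induce {i | v ∈ B i}).Connected) {r a b j : ι} {v u : V}
    (ha : v ∈ B a) (hamin : ∀ k, v ∈ B k → T.dist r a ≤ T.dist r k)
    (hb : u ∈ B b) (hbmin : ∀ k, u ∈ B k → T.dist r b ≤ T.dist r k)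
    (hab : T.dist r b ≤ T.dist r a) (hvj : v ∈ B j) (huj : u ∈ B j) : u ∈ B a := by
  obtain ⟨P, hP, -⟩ := hc.exists_path_of_dist r j
  have haP := hT.mem_support_of_forall_dist_le (hB v) ha hamin hvj hP
  have hbP := hT.mem_support_of_forall_dist_le (hB u) hb hbmin huj hP
  obtain ⟨P₁, Q, hP₁, hQ, rfl⟩ := hP.mem_support_iff_exists_append.1 hbP
  rcases (P₁.mem_support_append_iff Q).1 haP with haP₁ | haQ
  · by_contra hua
    have hne : a ≠ b := fun h => hua (h ▸ hb)
    exact hab.not_gt (Walk.dist_lt_of_mem_support (hT.length_eq_dist hP₁) haP₁ hne)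
  · exact hT.support_subset_of_isPath (hB u) hb huj hQ a haQ

theorem exists_mem_forall_mem_of_mem_bag (hc : T.Connected) (hT : T.IsAcyclic)
    (hB : ∀ v, (T.induce {i | v ∈ B i}).Connected) {S : Finset V} (hS : S.Nonempty) :
    ∃ v ∈ S, ∃ i, v ∈ B i ∧ ∀ u ∈ S, ∀ j, v ∈ B j → u ∈ B j → u ∈ B i := by
  obtain ⟨r⟩ := hc.nonempty
  let top v :=
    Function.argminOn (T.dist r) {i | v ∈ B i} (Set.nonempty_coe_sort.1 (hB v).nonempty)
  have htop v : v ∈ B (top v) := Function.argminOn_mem (T.dist r) {i | v ∈ B i} _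
  have hmin v k (hk : v ∈ B k) : T.dist r (top v) ≤ T.dist r k :=
    Function.argminOn_le (T.dist r) {i | v ∈ B i} hk
  obtain ⟨v, hv, hmax⟩ := S.exists_max_image (fun v => T.dist r (top v)) hS
  exact ⟨v, hv, top v, htop v, fun u hu j hvj huj =>
    mem_bag_of_dist_le hc hT hB (htop v) (hmin v) (htop u) (hmin u) (hmax u hu) hvj huj⟩

end Tree

end SimpleGraph

def bagGraph {ι V : Type*} (B : ι → Set V) : SimpleGraph V where
  Adj u w := u ≠ w ∧ ∃ i, u ∈ B i ∧ w ∈ B i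
  symm := ⟨fun _ _ ⟨hne, i, hu, hw⟩ => ⟨hne.symm, i, hw, hu⟩⟩
  loopless := ⟨fun _ h => h.1 rfl⟩

lemma bagGraph_adj {ι V : Type*} {B : ι → Set V} {u w : V} :
    (bagGraph B).Adj u w ↔ u ≠ w ∧ ∃ i, u ∈ B i ∧ w ∈ B i :=
  Iff.rfl

def SimpliciallyDegenerate {V : Type*} (H : SimpleGraph V) (k : ℕ) : Prop :=
  ∀ S : Finset V, S.Nonempty →
    ∃ v ∈ S, ∃ N : Finset V, #N ≤ k ∧ H.IsClique (N : Set V) ∧ ∀ w ∈ S, H.Adj v w → w ∈ N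

theorem HasTreewidthLE.exists_le_simpliciallyDegenerate {V : Type} {G : SimpleGraph V} {k : ℕ}
    (h : HasTreewidthLE G k) : ∃ H : SimpleGraph V, G ≤ H ∧ SimpliciallyDegenerate H k := by
  classical
  obtain ⟨ι, T, B, hTc, hTa, -, hedge, hB, hcard⟩ := h
  refine ⟨bagGraph fun i => (B i : Set V), fun u w huw => bagGraph_adj.2 ⟨huw.ne, hedge u w huw⟩,
    fun S hS => ?_⟩
  obtain ⟨v, hv, i, hvi, hi⟩ := SimpleGraph.exists_mem_forall_mem_of_mem_bag hTc hTa hB hS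
  refine ⟨v, hv, (B i).erase v, ?_, ?_, ?_⟩
  · have := card_erase_of_mem (s := B i) hvi
    have := hcard i
    omega
  · exact fun a ha b hb hab => bagGraph_adj.2 ⟨hab, i, mem_of_mem_erase ha, mem_of_mem_erase hb⟩
  · intro w hw hadj
    obtain ⟨hvw, j, hvj, hwj⟩ := bagGraph_adj.1 hadj
    exact mem_erase.2 ⟨hvw.symm, hi w hw j hvj hwj⟩

/-- A slot is a colour together with, for each sign `s`, the class of colours reserved for the
neighbours across edges of sign `s`. -/
abbrev Slot := Fin 7 × (Bool → Finset (Fin 7))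

namespace Slot

def relabel (e : Fin 7 ↪ Fin 7) (x : Slot) : Slot := (e x.1, fun s => (x.2 s).map e)

def canonPair (s : Bool) : Slot × Slot :=
  ((0, fun b => if b = s then {1, 3, 4} else {2, 5, 6}),
   (1, fun b => if b = s then {0, 2, 4} else {3, 5, 6}))

def Compatible (s : Bool) (x y : Slot) : Prop :=
  ∃ e : Fin 7 ↪ Fin 7, x = relabel e (canonPair s).1 ∧ y = relabel e (canonPair s).2

def IsValid (x : Slot) : Prop := ∃ s y, Compatible s x y

lemma relabel_relabel (e f : Fin 7 ↪ Fin 7) (x : Slot) :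
    relabel f (relabel e x) = relabel (e.trans f) x := by
  simp only [relabel, Finset.map_map]
  rfl

lemma Compatible.relabel {s : Bool} {x y : Slot} (h : Compatible s x y) (f : Fin 7 ↪ Fin 7) :
    Compatible s (relabel f x) (relabel f y) := by
  obtain ⟨e, rfl, rfl⟩ := h
  exact ⟨e.trans f, relabel_relabel .., relabel_relabel ..⟩

lemma Compatible.isValid {s : Bool} {x y : Slot} (h : Compatible s x y) : x.IsValid :=
  ⟨s, y, h⟩

lemma isValid_canonPair : (canonPair true).1.IsValid :=
  ⟨true, (canonPair true).2, Function.Embedding.refl _, by decide, by decide⟩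

lemma Compatible.symm {s : Bool} {x y : Slot} (h : Compatible s x y) : Compatible s y x := by
  obtain ⟨e, rfl, rfl⟩ := h
  have hswap : Compatible s (canonPair s).2 (canonPair s).1 :=
    ⟨⟨![1, 0, 3, 2, 4, 5, 6], by decide⟩, by cases s <;> decide, by cases s <;> decide⟩
  exact hswap.relabel e

lemma Compatible.fst_ne {s : Bool} {x y : Slot} (h : Compatible s x y) : x.1 ≠ y.1 := by
  obtain ⟨e, rfl, rfl⟩ := h
  exact e.injective.ne (show (0 : Fin 7) ≠ 1 by decide)

lemma Compatible.fst_mem {s : Bool} {x y : Slot} (h : Compatible s x y) : y.1 ∈ x.2 s := by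
  obtain ⟨e, rfl, rfl⟩ := h
  simp [Slot.relabel, canonPair]

lemma Compatible.disjoint {s s' : Bool} {x y : Slot} (h : Compatible s x y) (hs : s ≠ s') :
    Disjoint (x.2 s) (x.2 s') := by
  obtain ⟨e, rfl, -⟩ := h
  simp only [Slot.relabel, canonPair, if_neg (Ne.symm hs), Finset.disjoint_map]
  decide

lemma Compatible.fst_ne_fst {s s' : Bool} {m x y : Slot} (hx : Compatible s m x)
    (hy : Compatible s' m y) (hs : s ≠ s') : x.1 ≠ y.1 := fun hxy =>
  Finset.disjoint_left.mp (hx.disjoint hs) hx.fst_mem (hxy ▸ hy.fst_mem)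

/-- Relabellings carrying the canonical pairs of signs `sa` and `sb` onto the two new edges of a
triangle built on the canonical pair of sign `t`; they depend only on whether `sa` and `sb` agree
with `t`. -/
def commonRelabelling : Bool → Bool → (Fin 7 ↪ Fin 7) × (Fin 7 ↪ Fin 7)
  | true, true => (⟨![4, 0, 3, 5, 1, 2, 6], by decide⟩, ⟨![4, 1, 2, 5, 0, 3, 6], by decide⟩)
  | true, false => (⟨![3, 0, 1, 5, 4, 2, 6], by decide⟩, ⟨![3, 1, 5, 2, 6, 0, 4], by decide⟩)
  | false, true => (⟨![2, 0, 5, 3, 6, 1, 4], by decide⟩, ⟨![2, 1, 0, 5, 4, 3, 6], by decide⟩)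
  | false, false => (⟨![5, 0, 2, 1, 6, 3, 4], by decide⟩, ⟨![5, 1, 3, 0, 6, 2, 4], by decide⟩)

lemma commonRelabelling_spec : ∀ t sa sb : Bool,
    (canonPair t).1 = relabel (commonRelabelling (sa == t) (sb == t)).1 (canonPair sa).2 ∧
    relabel (commonRelabelling (sa == t) (sb == t)).1 (canonPair sa).1 =
      relabel (commonRelabelling (sa == t) (sb == t)).2 (canonPair sb).1 ∧
    (canonPair t).2 = relabel (commonRelabelling (sa == t) (sb == t)).2 (canonPair sb).2 := by
  decide

lemma Compatible.exists_common {t : Bool} {a b : Slot} (h : Compatible t a b) (sa sb : Bool) :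
    ∃ v, Compatible sa v a ∧ Compatible sb v b := by
  obtain ⟨e, rfl, rfl⟩ := h
  obtain ⟨h₁, h₂, h₃⟩ := commonRelabelling_spec t sa sb
  set e₁ := (commonRelabelling (sa == t) (sb == t)).1
  set e₂ := (commonRelabelling (sa == t) (sb == t)).2
  refine ⟨Slot.relabel e (Slot.relabel e₁ (canonPair sa).1), ?_, ?_⟩
  · exact (show Compatible sa _ (canonPair t).1 from ⟨e₁, rfl, h₁⟩).relabel e
  · exact (show Compatible sb _ (canonPair t).2 from ⟨e₂, h₂, h₃⟩).relabel e

lemma exists_isValid_forall_compatible {κ : Type*} {N : Finset κ} (hN : #N ≤ 2)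
    (x : κ → Slot) (τ : κ → Bool) (hval : ∀ a ∈ N, (x a).IsValid)
    (hpair : ∀ a ∈ N, ∀ b ∈ N, a ≠ b → ∃ t, Compatible t (x a) (x b)) :
    ∃ y : Slot, y.IsValid ∧ ∀ a ∈ N, Compatible (τ a) y (x a) := by
  classical
  obtain h | h | h : #N = 0 ∨ #N = 1 ∨ #N = 2 := by omega
  · exact ⟨_, isValid_canonPair, by simp [card_eq_zero.1 h]⟩
  · obtain ⟨a, rfl⟩ := card_eq_one.1 h
    obtain ⟨s, z, hz⟩ := hval a (mem_singleton_self a)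
    obtain ⟨y, hy, -⟩ := hz.exists_common (τ a) true
    exact ⟨y, hy.isValid, by simpa using hy⟩
  · obtain ⟨a, b, hab, rfl⟩ := card_eq_two.1 h
    obtain ⟨t, ht⟩ := hpair a (by simp) b (by simp) hab
    obtain ⟨y, hya, hyb⟩ := ht.exists_common (τ a) (τ b)
    exact ⟨y, hya.isValid, by simp [hya, hyb]⟩

end Slot

theorem SimpliciallyDegenerate.exists_compatible_slots {V : Type*} [Finite V] {H : SimpleGraph V}
    (hH : SimpliciallyDegenerate H 2) (σ : Sym2 V → Bool) :
    ∃ x : V → Slot, ∀ ⦃u w⦄, H.Adj u w → Slot.Compatible (σ s(u, w)) (x u) (x w) := by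
  classical
  cases nonempty_fintype V
  suffices h : ∀ S : Finset V, ∃ x : V → Slot, (∀ v ∈ S, (x v).IsValid) ∧
      ∀ u ∈ S, ∀ w ∈ S, H.Adj u w → Slot.Compatible (σ s(u, w)) (x u) (x w) by
    obtain ⟨x, -, hx⟩ := h univ
    exact ⟨x, fun u w huw => hx u (mem_univ u) w (mem_univ w) huw⟩
  intro S
  induction S using Finset.strongInduction with
  | H S ih =>
  rcases S.eq_empty_or_nonempty with rfl | hS
  · exact ⟨fun _ => (Slot.canonPair true).1, by simp, by simp⟩
  obtain ⟨v, hv, N, hNcard, hNclique, hvN⟩ := hH S hS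
  obtain ⟨x, hxval, hx⟩ := ih (S.erase v) (erase_ssubset hv)
  obtain ⟨y, hyval, hy⟩ := Slot.exists_isValid_forall_compatible
    ((card_filter_le N (· ∈ S.erase v)).trans hNcard) x (fun w => σ s(v, w))
    (fun a ha => hxval a (mem_filter.1 ha).2) fun a ha b hb hab =>
      ⟨_, hx a (mem_filter.1 ha).2 b (mem_filter.1 hb).2
        (hNclique (mem_filter.1 ha).1 (mem_filter.1 hb).1 hab)⟩
  have hvw : ∀ w ∈ S, H.Adj v w → Slot.Compatible (σ s(v, w)) y (x w) := fun w hw hadj =>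
    hy w (mem_filter.2 ⟨hvN w hw hadj, mem_erase.2 ⟨hadj.ne.symm, hw⟩⟩)
  refine ⟨Function.update x v y, fun u hu => ?_, fun u hu w hw huw => ?_⟩
  · rcases eq_or_ne u v with rfl | huv
    · simpa using hyval
    · simpa [huv] using hxval u (mem_erase.2 ⟨huv, hu⟩)
  · rcases eq_or_ne u v with rfl | huv
    · simpa [huw.ne.symm] using hvw w hw huw
    rcases eq_or_ne w v with rfl | hwv
    · simpa [huv, Sym2.eq_swap] using (hvw u hu huw.symm).symm
    · simpa [huv, hwv] using hx u (mem_erase.2 ⟨huv, hu⟩) w (mem_erase.2 ⟨hwv, hw⟩) huw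

section SignedColouring

variable {V : Type} {G : SimpleGraph V} {σ : Sym2 V → Bool}

lemma exists_adj_adj_sign_ne_of_isNegWalk {u w : V} {p : G.Walk u w} (hlen : p.length = 2)
    (hp : IsNegWalk σ p) : ∃ m, G.Adj m u ∧ G.Adj m w ∧ σ s(m, u) ≠ σ s(m, w) := by
  match p, hlen with
  | .cons h₁ (.cons h₂ .nil), _ =>
    refine ⟨_, h₁.symm, h₂, ?_⟩
    simp only [IsNegWalk, negCount, SimpleGraph.Walk.edges_cons, SimpleGraph.Walk.edges_nil,
      List.filter_cons, List.filter_nil] at hp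
    rw [Sym2.eq_swap]
    cases hu : σ s(u, _) <;> cases hw : σ s(_, w) <;> simp_all [Nat.odd_iff]

theorem colorable_sup_strongExactDistNeg_two {α : Type*} [Fintype α] (c : V → α)
    (hadj : ∀ ⦃u w⦄, G.Adj u w → c u ≠ c w)
    (hsign : ∀ ⦃m u w⦄, G.Adj m u → G.Adj m w → σ s(m, u) ≠ σ s(m, w) → c u ≠ c w) :
    (G ⊔ strongExactDistNeg G σ 2).Colorable (Fintype.card α) := by
  refine (SimpleGraph.Coloring.mk c ?_).colorable
  rintro u w (huw | ⟨-, ⟨-, p, -, hlen, hp⟩ | ⟨-, p, -, hlen, hp⟩⟩)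
  · exact hadj huw
  · obtain ⟨m, hmu, hmw, hs⟩ := exists_adj_adj_sign_ne_of_isNegWalk hlen hp
    exact hsign hmu hmw hs
  · obtain ⟨m, hmw, hmu, hs⟩ := exists_adj_adj_sign_ne_of_isNegWalk hlen hp
    exact (hsign hmw hmu hs).symm

end SignedColouring

theorem treewidth_two_strong_exact_dist_two_chromatic_le_seven
    {V : Type} [Fintype V] (G : SimpleGraph V) (σ : Sym2 V → Bool)
    (htw : HasTreewidthLE G 2) :
    (G ⊔ strongExactDistNeg G σ 2).chromaticNumber ≤ 7 := by
  obtain ⟨H, hGH, hH⟩ := htw.exists_le_simpliciallyDegenerate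
  obtain ⟨x, hx⟩ := hH.exists_compatible_slots σ
  have hcol := colorable_sup_strongExactDistNeg_two (fun v => (x v).1)
    (fun _ _ huw => (hx (hGH huw)).fst_ne)
    (fun _ _ _ hmu hmw hs => (hx (hGH hmu)).fst_ne_fst (hx (hGH hmw)) hs)
  simpa using hcol.chromaticNumber_le
end

section
/- For the signed graph Ŝ_{n,k} obtained from the complete graph K_n by replacing each edge with a negative path of length k (a path of length k containing an odd number of negative edges, e.g., all edges negative when k is odd, or exactly one negative edge), the chromatic number of the exact-distance -k graph of Ŝ_{n,k} equals n. -/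
open SimpleGraph

/-- Vertices of the `k`-subdivision of `K_n`: branch vertices plus, for each pair
`i < j`, internal vertices `0, …, k-2` of the subdividing path. -/
abbrev SnkV (n k : ℕ) : Type := Fin n ⊕ ({p : Fin n × Fin n // p.1 < p.2} × Fin (k - 1))

def snkRel (n k : ℕ) : SnkV n k → SnkV n k → Prop
  | Sum.inl i, Sum.inr z => ((z.2 : ℕ) = 0 ∧ i = z.1.1.1) ∨ ((z.2 : ℕ) = k - 2 ∧ i = z.1.1.2)
  | Sum.inr z, Sum.inr z' => z.1 = z'.1 ∧ (z'.2 : ℕ) = (z.2 : ℕ) + 1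
  | _, _ => False

/-- `S_{n,k}`: the graph obtained from `K_n` by replacing each edge with a path of length `k`. -/
def Snk (n k : ℕ) : SimpleGraph (SnkV n k) := SimpleGraph.fromRel (snkRel n k)

/-- A signature on `S_{n,k}` making each subdividing path negative: exactly the first
edge of each subdividing path (the one at its smaller branch endpoint) is negative. -/
def snkSigma (n k : ℕ) : Sym2 (SnkV n k) → Bool :=
  Sym2.lift ⟨fun a b =>
    match a, b with
    | Sum.inl i, Sum.inr z => decide ((z.2 : ℕ) = 0 ∧ i = z.1.1.1)
    | Sum.inr z, Sum.inl i => decide ((z.2 : ℕ) = 0 ∧ i = z.1.1.1)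
    | _, _ => false,
    by intro a b; cases a <;> cases b <;> rfl⟩

/-!
Colour a branch vertex by its index and an internal vertex by the smaller end of its path. Two
vertices of the same colour are at distance less than `k`, or more than `k` (a walk between
different paths passes through a branch vertex), or are joined through their common end by a path
of length `k` with two negative edges; so the colouring is proper for the exact-distance `-k` graph.

The branch vertices are pairwise at distance `k`. Every path of length `k` from `i` to `j` is
negative because of a parity potential: along any edge on which `min (d(·, j), k)` drops by one,
the parity of negative edges on geodesics to `j` changes exactly by the sign of that edge.
-/

section SignedWalks

variable {V : Type} {G : SimpleGraph V} (σ : Sym2 V → Bool)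

lemma negCount_cons {x y z : V} (h : G.Adj x y) (p : G.Walk y z) :
    negCount σ (Walk.cons h p) = (σ s(x, y)).toNat + negCount σ p := by
  cases hσ : σ s(x, y) <;> simp [negCount, hσ, Nat.add_comm]

lemma negCount_append {x y z : V} (p : G.Walk x y) (q : G.Walk y z) :
    negCount σ (p.append q) = negCount σ p + negCount σ q := by
  simp [negCount, List.filter_append]

lemma negCount_reverse {x y : V} (p : G.Walk x y) : negCount σ p.reverse = negCount σ p := by
  simp [negCount, List.filter_reverse]

lemma exactDistNeg_adj {k : ℕ} {x y : V} :
    (exactDistNeg G σ k).Adj x y ↔ x ≠ y ∧ G.dist x y = k ∧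
      ∀ p : G.Walk x y, p.IsPath → p.length = k → IsNegWalk σ p := by
  refine (fromRel_adj _ _ _).trans (and_congr_right fun _ => ⟨?_, Or.inl⟩)
  rintro (h | ⟨hd, hneg⟩)
  · exact h
  refine ⟨dist_comm.trans hd, fun p hp hl => ?_⟩
  simpa [IsNegWalk, negCount_reverse] using hneg p.reverse hp.reverse (by simpa using hl)

variable {σ}

lemma SimpleGraph.exists_walk_length_eq_of_adj_succ {f : ℕ → V}
    {a b : ℕ} (hab : a ≤ b) (hf : ∀ i, a ≤ i → i < b → G.Adj (f i) (f (i + 1))) :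
    ∃ p : G.Walk (f a) (f b), p.length = b - a := by
  induction b, hab using Nat.le_induction with
  | base => exact ⟨.nil, by simp⟩
  | succ b hab ih =>
    obtain ⟨p, hp⟩ := ih fun i hai hib => hf i hai (by omega)
    exact ⟨p.concat (hf b hab (by omega)), by simp only [Walk.length_concat, hp]; omega⟩

lemma SimpleGraph.Walk.le_add_length_of_lipschitz (f : V → ℕ)
    (hf : ∀ u v, G.Adj u v → f u ≤ f v + 1) {x y : V} (p : G.Walk x y) :
    f x ≤ f y + p.length := by
  induction p with
  | nil => simp
  | cons h p ih => have := hf _ _ h; rw [Walk.length_cons]; omega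

-- A walk of length `f v` into `t` must lower `f` by one at every step.
theorem isNegWalk_iff_of_length_eq {f : V → ℕ} {par : V → Bool} {t : V}
    (hf : ∀ u v, G.Adj u v → f u ≤ f v + 1)
    (hpar : ∀ u v, G.Adj u v → f u = f v + 1 → par u = (σ s(u, v) ^^ par v))
    (hft : f t = 0) (hpt : par t = false) {v : V} (p : G.Walk v t) (hp : p.length = f v) :
    IsNegWalk σ p ↔ par v = true := by
  suffices (negCount σ p).bodd = par v by
    rw [IsNegWalk, Nat.odd_iff, Nat.mod_two_of_bodd, this]
    cases par v <;> decide
  induction p with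
  | nil => simp [negCount, hpt]
  | @cons v u _ h q ih =>
    have hq := Walk.le_add_length_of_lipschitz f hf q
    have hvu := hf v u h
    rw [Walk.length_cons] at hp
    rw [negCount_cons, Nat.bodd_add, ih hft hpt (by omega), hpar v u h (by omega)]
    cases σ s(v, u) <;> rfl

end SignedWalks

namespace Snk

variable {n k : ℕ}

lemma adj_iff {u v : SnkV n k} :
    (Snk n k).Adj u v ↔ u ≠ v ∧ (snkRel n k u v ∨ snkRel n k v u) :=
  fromRel_adj _ _ _

def pathVertex (q : {p : Fin n × Fin n // p.1 < p.2}) (i : ℕ) : SnkV n k :=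
  if h0 : i = 0 then .inl q.1.1
  else if h : i < k then .inr (q, ⟨i - 1, by omega⟩)
  else .inl q.1.2

lemma pathVertex_zero (q : {p : Fin n × Fin n // p.1 < p.2}) :
    (pathVertex q 0 : SnkV n k) = .inl q.1.1 := rfl

lemma pathVertex_succ (q : {p : Fin n × Fin n // p.1 < p.2}) (t : Fin (k - 1)) :
    (pathVertex q (t + 1) : SnkV n k) = .inr (q, t) := by
  simp [pathVertex, show (t : ℕ) + 1 < k by omega]

lemma pathVertex_self (hk : 2 ≤ k) (q : {p : Fin n × Fin n // p.1 < p.2}) :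
    (pathVertex q k : SnkV n k) = .inl q.1.2 := by
  simp [pathVertex, show k ≠ 0 by omega]

lemma pathVertex_adj (hk : 2 ≤ k) (q : {p : Fin n × Fin n // p.1 < p.2}) {i : ℕ} (hi : i < k) :
    (Snk n k).Adj (pathVertex q i) (pathVertex q (i + 1)) := by
  rw [adj_iff]
  unfold pathVertex
  have hq : q.1.1 ≠ q.1.2 := q.2.ne
  split_ifs <;> simp_all [snkRel] <;> omega

lemma exists_walk_pathVertex (hk : 2 ≤ k) (q : {p : Fin n × Fin n // p.1 < p.2}) {i i' : ℕ}
    {x y : SnkV n k} (hx : pathVertex q i = x) (hy : pathVertex q i' = y) (h : i ≤ i')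
    (hi' : i' ≤ k) : ∃ p : (Snk n k).Walk x y, p.length = i' - i := by
  subst hx hy
  exact exists_walk_length_eq_of_adj_succ h fun _ _ hm => pathVertex_adj hk q (by omega)

-- `truncDist j = min (dist · (inl j)) k`, and `geodesicParity j v` is the parity of the number of
-- negative edges on every walk of length `truncDist j v` from `v` to `inl j`.
def truncDist (j : Fin n) : SnkV n k → ℕ
  | .inl c => if c = j then 0 else k
  | .inr z => if z.1.1.1 = j then z.2 + 1 else if z.1.1.2 = j then k - 1 - z.2 else k

def geodesicParity (j : Fin n) : SnkV n k → Bool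
  | .inl c => c ≠ j
  | .inr z => z.1.1.1 = j

lemma truncDist_lipschitz (j : Fin n) {u v : SnkV n k} (h : (Snk n k).Adj u v) :
    truncDist j u ≤ truncDist j v + 1 := by
  have key : ∀ u v, snkRel n k u v →
      truncDist j u ≤ truncDist j v + 1 ∧ truncDist j v ≤ truncDist j u + 1 := by
    rintro (c | ⟨q, t⟩) (c' | ⟨q', t'⟩) h <;> simp only [snkRel] at h <;>
    · have hq : q'.1.1 ≠ q'.1.2 := q'.2.ne
      have ht := t'.isLt
      simp only [truncDist]
      split_ifs <;> simp_all <;> omega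
  obtain ⟨-, h | h⟩ := adj_iff.mp h
  exacts [(key u v h).1, (key v u h).2]

lemma geodesicParity_coherent (j : Fin n) {u v : SnkV n k} (h : (Snk n k).Adj u v)
    (hdrop : truncDist j u = truncDist j v + 1) :
    geodesicParity j u = (snkSigma n k s(u, v) ^^ geodesicParity j v) := by
  have key : ∀ u v, snkRel n k u v →
      (truncDist j u = truncDist j v + 1 →
        geodesicParity j u = (snkSigma n k s(u, v) ^^ geodesicParity j v)) ∧
      (truncDist j v = truncDist j u + 1 →
        geodesicParity j v = (snkSigma n k s(u, v) ^^ geodesicParity j u)) := by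
    clear h hdrop
    rintro (c | ⟨q, t⟩) (c' | ⟨q', t'⟩) h <;> simp only [snkRel] at h
    · have hq : q'.1.1 ≠ q'.1.2 := q'.2.ne
      have ht := t'.isLt
      obtain ⟨h0, rfl⟩ | ⟨h0, rfl⟩ := h <;>
      simp only [truncDist, geodesicParity, snkSigma, Sym2.lift_mk, h0] <;>
      split_ifs <;> grind
    · obtain ⟨rfl, h1⟩ := h
      simp only [truncDist, geodesicParity, snkSigma, Sym2.lift_mk, h1]
      split_ifs <;> grind
  obtain ⟨-, h | h⟩ := adj_iff.mp h
  · exact (key u v h).1 hdrop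
  · rw [Sym2.eq_swap]; exact (key v u h).2 hdrop

lemma truncDist_le_length (j : Fin n) {v : SnkV n k} (p : (Snk n k).Walk v (.inl j)) :
    truncDist j v ≤ p.length := by
  simpa [truncDist] using Walk.le_add_length_of_lipschitz _ (fun _ _ => truncDist_lipschitz j) p

lemma truncDist_le_dist (j : Fin n) {v : SnkV n k} (h : (Snk n k).Reachable v (.inl j)) :
    truncDist j v ≤ (Snk n k).dist v (.inl j) := by
  obtain ⟨p, hp⟩ := h.exists_walk_length_eq_dist
  exact hp ▸ truncDist_le_length j p

lemma isNegWalk_iff_geodesicParity (j : Fin n) {v : SnkV n k} (p : (Snk n k).Walk v (.inl j))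
    (hp : p.length = truncDist j v) : IsNegWalk (snkSigma n k) p ↔ geodesicParity j v = true :=
  isNegWalk_iff_of_length_eq (fun _ _ => truncDist_lipschitz j)
    (fun _ _ => geodesicParity_coherent j)
    (by simp [truncDist]) (by simp [geodesicParity]) p hp

lemma dist_inl_inl (hk : 2 ≤ k) {i j : Fin n} (hij : i ≠ j) :
    (Snk n k).dist (.inl i) (.inl j) = k := by
  wlog h : i < j generalizing i j
  · rw [dist_comm]; exact this hij.symm (by omega)
  obtain ⟨p, hp⟩ := exists_walk_pathVertex hk ⟨(i, j), h⟩ (pathVertex_zero _)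
    (pathVertex_self hk _) (Nat.zero_le k) le_rfl
  refine le_antisymm ((dist_le p).trans_eq hp) ?_
  simpa [truncDist, hij] using truncDist_le_dist j ⟨p⟩

lemma exactDistNeg_adj_inl (hk : 2 ≤ k) {i j : Fin n} (hij : i ≠ j) :
    (exactDistNeg (Snk n k) (snkSigma n k) k).Adj (.inl i) (.inl j) := by
  refine (exactDistNeg_adj _).mpr ⟨by simpa, dist_inl_inl hk hij, fun p _ hp => ?_⟩
  rw [isNegWalk_iff_geodesicParity j p (by simp [hp, truncDist, hij])]
  simp [geodesicParity, hij]

lemma exists_negWalk_inr_inl (hk : 2 ≤ k) (q : {p : Fin n × Fin n // p.1 < p.2})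
    (t : Fin (k - 1)) {a : Fin n} (ha : q.1.1 = a) :
    ∃ p : (Snk n k).Walk (.inr (q, t)) (.inl a),
      p.length = t + 1 ∧ IsNegWalk (snkSigma n k) p := by
  subst ha
  obtain ⟨p, hp⟩ := exists_walk_pathVertex hk q (pathVertex_zero q) (pathVertex_succ q t)
    (Nat.zero_le _) (by omega)
  refine ⟨p.reverse, by simpa using hp, ?_⟩
  rw [isNegWalk_iff_geodesicParity _ _ (by simp [hp, truncDist])]
  simp [geodesicParity]

lemma dist_inr_inr_lt (hk : 2 ≤ k) (q : {p : Fin n × Fin n // p.1 < p.2}) (s t : Fin (k - 1)) :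
    (Snk n k).dist (.inr (q, s)) (.inr (q, t)) < k := by
  wlog h : s ≤ t generalizing s t
  · rw [dist_comm]; exact this t s (by omega)
  obtain ⟨p, hp⟩ := exists_walk_pathVertex hk q (pathVertex_succ q s) (pathVertex_succ q t)
    (by omega) (by omega)
  have := dist_le p
  omega

lemma exists_inl_mem_support {q q' : {p : Fin n × Fin n // p.1 < p.2}} {t t' : Fin (k - 1)}
    (p : (Snk n k).Walk (.inr (q, t)) (.inr (q', t'))) (hq : q ≠ q') :
    ∃ c, .inl c ∈ p.support := by
  obtain ⟨d, hd, ⟨s, hs⟩, hout⟩ :=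
    p.exists_boundary_dart {v | ∃ s, v = .inr (q, s)} ⟨t, rfl⟩ (by simp [hq.symm])
  rcases hsnd : d.snd with c | ⟨q'', s'⟩
  · exact ⟨c, hsnd ▸ p.dart_snd_mem_support_of_mem_darts hd⟩
  · have hadj := d.adj
    rw [hs, hsnd, adj_iff] at hadj
    obtain ⟨-, ⟨rfl, -⟩ | ⟨rfl, -⟩⟩ := hadj <;> exact absurd ⟨s', hsnd⟩ hout

lemma truncDist_add_le_length (c : Fin n) {x y : SnkV n k} (p : (Snk n k).Walk x y)
    (hc : .inl c ∈ p.support) : truncDist c x + truncDist c y ≤ p.length := by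
  rw [← p.take_spec hc, Walk.length_append]
  have h1 := truncDist_le_length c (p.takeUntil _ hc)
  have h2 := truncDist_le_length c (p.dropUntil _ hc).reverse
  rw [Walk.length_reverse] at h2
  omega

lemma length_ge_of_fst_eq {q q' : {p : Fin n × Fin n // p.1 < p.2}} {t s : Fin (k - 1)}
    (hq : q ≠ q') (h1 : q.1.1 = q'.1.1) (p : (Snk n k).Walk (.inr (q, t)) (.inr (q', s))) :
    t + s + 2 ≤ p.length ∨ k < p.length := by
  obtain ⟨c, hc⟩ := exists_inl_mem_support p hq
  have hlen := truncDist_add_le_length c p hc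
  have h2 : q.1.2 ≠ q'.1.2 := fun h2 => hq (Subtype.ext (Prod.ext h1 h2))
  have := t.isLt
  have := s.isLt
  simp only [truncDist] at hlen
  split_ifs at hlen <;> grind

lemma exists_even_walk_of_fst_eq (hk : 2 ≤ k) {q q' : {p : Fin n × Fin n // p.1 < p.2}}
    (h1 : q.1.1 = q'.1.1) (t s : Fin (k - 1)) :
    ∃ p : (Snk n k).Walk (.inr (q, t)) (.inr (q', s)),
      p.length = t + s + 2 ∧ Even (negCount (snkSigma n k) p) := by
  obtain ⟨p, hp, hpneg⟩ := exists_negWalk_inr_inl hk q t rfl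
  obtain ⟨p', hp', hpneg'⟩ := exists_negWalk_inr_inl hk q' s h1.symm
  refine ⟨p.append p'.reverse, by simp [hp, hp']; omega, ?_⟩
  rw [negCount_append, negCount_reverse]
  exact hpneg.add_odd hpneg'

lemma exists_even_path_of_fst_eq (hk : 2 ≤ k) {q q' : {p : Fin n × Fin n // p.1 < p.2}}
    {t s : Fin (k - 1)} (hq : q ≠ q') (h1 : q.1.1 = q'.1.1)
    (hd : (Snk n k).dist (.inr (q, t)) (.inr (q', s)) = k) :
    ∃ p : (Snk n k).Walk (.inr (q, t)) (.inr (q', s)),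
      p.IsPath ∧ p.length = k ∧ Even (negCount (snkSigma n k) p) := by
  obtain ⟨p, hp, hpeven⟩ := exists_even_walk_of_fst_eq hk h1 t s
  -- a walk of length `t + s + 2 ≤ k` is a shortest one, hence a path
  obtain ⟨r, hr⟩ := Reachable.exists_walk_length_eq_dist ⟨p⟩
  have hr_ge := length_ge_of_fst_eq hq h1 r
  have hp_ge := dist_le p
  have hpk : p.length = k := by omega
  exact ⟨p, p.isPath_of_length_eq_dist (by omega), hpk, hpeven⟩

def lowerEnd : SnkV n k → Fin n
  | .inl i => i
  | .inr z => z.1.1.1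

lemma not_adj_of_lowerEnd_eq (hk : 2 ≤ k) {x y : SnkV n k} (h : lowerEnd x = lowerEnd y) :
    ¬ (exactDistNeg (Snk n k) (snkSigma n k) k).Adj x y := by
  intro hadj
  obtain ⟨hne, hd, hneg⟩ := (exactDistNeg_adj _).mp hadj
  rcases x with i | ⟨q, t⟩ <;> rcases y with i' | ⟨q', s⟩ <;> simp only [lowerEnd] at h
  · exact hne (congrArg _ h)
  · obtain ⟨p, hp, -⟩ := exists_negWalk_inr_inl hk q' s h.symm
    have := (dist_le p.reverse).trans_eq (p.length_reverse.trans hp)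
    omega
  · obtain ⟨p, hp, -⟩ := exists_negWalk_inr_inl hk q t h
    have := (dist_le p).trans_eq hp
    omega
  · by_cases hq : q = q'
    · subst hq
      exact (dist_inr_inr_lt hk q t s).ne hd
    · obtain ⟨p, hpath, hlen, heven⟩ := exists_even_path_of_fst_eq hk hq h hd
      exact Nat.not_even_iff_odd.mpr (hneg p hpath hlen) heven

lemma colorable (hk : 2 ≤ k) : (exactDistNeg (Snk n k) (snkSigma n k) k).Colorable n :=
  ⟨Coloring.mk lowerEnd fun hadj heq => not_adj_of_lowerEnd_eq hk heq hadj⟩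

end Snk

theorem exactDistNeg_Snk_chromatic_eq_general
    (n k : ℕ) (hk : 2 ≤ k) :
    (exactDistNeg (Snk n k) (snkSigma n k) k).chromaticNumber = (n : ℕ∞) :=
  le_antisymm (mod_cast (Snk.colorable hk).chromaticNumber_le)
    (le_chromaticNumber_of_pairwise_adj (by simp) Sum.inl fun _ _ => Snk.exactDistNeg_adj_inl hk)

theorem exactDistNeg_Snk_chromatic_eq
    (n k : ℕ) (hn : 2 ≤ n) (hk : 2 ≤ k) :
    (exactDistNeg (Snk n k) (snkSigma n k) k).chromaticNumber = (n : ℕ∞) :=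
  exactDistNeg_Snk_chromatic_eq_general n k hk
end

section
/- For n,k ≥ 2, the graph S_{n,k} obtained from K_n by replacing each edge with a path of length k satisfies wcol_{k-1}(S_{n,k}) ≤ k+1. -/
open SimpleGraph

/-! ### Auxiliary material for `wcol_Snk_le` -/

/-- Order-encoding of the vertices of `S_{n,k}` into `ℕ`: branch vertices come first. -/
def gfun (n k : ℕ) : SnkV n k → ℕ
  | Sum.inl i => (i : ℕ)
  | Sum.inr z => n + ((z.1.1.1 : ℕ) * n + (z.1.1.2 : ℕ)) * k + (z.2 : ℕ)

lemma mul_add_cancel_aux {k A B s t : ℕ} (hs : s < k) (ht : t < k)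
    (h : A * k + s = B * k + t) : A = B ∧ s = t := by
  have hst : s = t := by
    have h1 := congrArg (· % k) h
    simpa [mul_comm, Nat.mul_add_mod, Nat.mod_eq_of_lt hs, Nat.mod_eq_of_lt ht] using h1
  subst hst
  refine ⟨?_, rfl⟩
  have hk0 : 0 < k := by omega
  have hAB : A * k = B * k := by omega
  exact Nat.eq_of_mul_eq_mul_right hk0 hAB

lemma gfun_inj (n k : ℕ) : Function.Injective (gfun n k) := by
  rintro (i | ⟨⟨⟨a, b⟩, hab⟩, s⟩) (j | ⟨⟨⟨c, d⟩, hcd⟩, t⟩) h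
  · simp only [gfun] at h
    exact congrArg Sum.inl (Fin.ext h)
  · exfalso; simp only [gfun] at h; have := i.isLt; omega
  · exfalso; simp only [gfun] at h; have := j.isLt; omega
  · simp only [gfun] at h
    have h' : ((a : ℕ) * n + b) * k + (s : ℕ) = ((c : ℕ) * n + d) * k + (t : ℕ) := by omega
    obtain ⟨h1, h2⟩ := mul_add_cancel_aux (by have := s.isLt; omega) (by have := t.isLt; omega) h'
    obtain ⟨h3, h4⟩ := mul_add_cancel_aux b.isLt d.isLt h1
    have ha : a = c := Fin.ext h3
    have hb : b = d := Fin.ext h4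
    have hs : s = t := Fin.ext h2
    subst ha; subst hb; subst hs; rfl

/-- The invariant: where a vertex `x` that is `gfun`-minimal on a walk of length `m`
ending at `y` can be. -/
def SnkInv (n k m : ℕ) : SnkV n k → SnkV n k → Prop
  | x, Sum.inl i => x = Sum.inl i
  | x, Sum.inr z =>
      (∃ s, x = Sum.inr (z.1, s)) ∨
      (x = Sum.inl z.1.1.1 ∧ (z.2 : ℕ) + 1 ≤ m) ∨
      (x = Sum.inl z.1.1.2 ∧ k - 1 ≤ m + (z.2 : ℕ))

lemma key {n k : ℕ} (hk : 2 ≤ k) {x y : SnkV n k} (q : (Snk n k).Walk y x) :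
    q.length ≤ k - 1 → (∀ z ∈ q.support, gfun n k x ≤ gfun n k z) →
    SnkInv n k q.length x y := by
  induction q with
  | @nil a =>
      intro _ _
      rcases a with i | z
      · show Sum.inl i = Sum.inl i
        rfl
      · exact Or.inl ⟨z.2, rfl⟩
  | @cons u v w h r ih =>
      intro hlen hmin
      simp only [SimpleGraph.Walk.length_cons] at hlen ⊢
      have hmin' : ∀ z ∈ r.support, gfun n k w ≤ gfun n k z := by
        intro z hz
        exact hmin z (by simp [SimpleGraph.Walk.support_cons, hz])
      have IH := ih (by omega) hmin'
      unfold Snk at h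
      rw [SimpleGraph.fromRel_adj] at h
      obtain ⟨hne, hrel⟩ := h
      rcases u with i | zu <;> rcases v with j | zv
      · exact absurd hrel (by rintro (h1 | h1) <;> exact h1)
      · -- u = inl i, v = inr zv
        have hr : ((zv.2 : ℕ) = 0 ∧ i = zv.1.1.1) ∨ ((zv.2 : ℕ) = k - 2 ∧ i = zv.1.1.2) := by
          rcases hrel with h1 | h1
          · exact h1
          · exact h1.elim
        rcases IH with ⟨s, hx⟩ | ⟨hx, hc⟩ | ⟨hx, hc⟩
        · exfalso
          have hle := hmin (Sum.inl i) (SimpleGraph.Walk.start_mem_support _)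
          rw [hx] at hle
          simp only [gfun] at hle
          have := i.isLt; omega
        · rcases hr with ⟨h0, hi⟩ | ⟨h0, hi⟩
          · show w = Sum.inl i
            rw [hi]; exact hx
          · exfalso; omega
        · rcases hr with ⟨h0, hi⟩ | ⟨h0, hi⟩
          · exfalso; omega
          · show w = Sum.inl i
            rw [hi]; exact hx
      · -- u = inr zu, v = inl j
        have hr : ((zu.2 : ℕ) = 0 ∧ j = zu.1.1.1) ∨ ((zu.2 : ℕ) = k - 2 ∧ j = zu.1.1.2) := by
          rcases hrel with h1 | h1
          · exact h1.elim
          · exact h1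
        have hx : w = Sum.inl j := IH
        show (∃ s, w = Sum.inr (zu.1, s)) ∨
          (w = Sum.inl zu.1.1.1 ∧ (zu.2 : ℕ) + 1 ≤ r.length + 1) ∨
          (w = Sum.inl zu.1.1.2 ∧ k - 1 ≤ r.length + 1 + (zu.2 : ℕ))
        rcases hr with ⟨h0, hj⟩ | ⟨h0, hj⟩
        · exact Or.inr (Or.inl ⟨by rw [hj] at hx; exact hx, by omega⟩)
        · exact Or.inr (Or.inr ⟨by rw [hj] at hx; exact hx, by omega⟩)
      · -- u = inr zu, v = inr zv
        have hr : zu.1 = zv.1 ∧ ((zv.2 : ℕ) = (zu.2 : ℕ) + 1 ∨ (zu.2 : ℕ) = (zv.2 : ℕ) + 1) := by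
          rcases hrel with h1 | h1
          · exact ⟨h1.1, Or.inl h1.2⟩
          · exact ⟨h1.1.symm, Or.inr h1.2⟩
        obtain ⟨hseg, hstep⟩ := hr
        have IH' : (∃ s, w = Sum.inr (zv.1, s)) ∨
            (w = Sum.inl zv.1.1.1 ∧ (zv.2 : ℕ) + 1 ≤ r.length) ∨
            (w = Sum.inl zv.1.1.2 ∧ k - 1 ≤ r.length + (zv.2 : ℕ)) := IH
        show (∃ s, w = Sum.inr (zu.1, s)) ∨
          (w = Sum.inl zu.1.1.1 ∧ (zu.2 : ℕ) + 1 ≤ r.length + 1) ∨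
          (w = Sum.inl zu.1.1.2 ∧ k - 1 ≤ r.length + 1 + (zu.2 : ℕ))
        rcases IH' with ⟨s, hx⟩ | ⟨hx, hc⟩ | ⟨hx, hc⟩
        · exact Or.inl ⟨s, by rw [hseg]; exact hx⟩
        · exact Or.inr (Or.inl ⟨by rw [hseg]; exact hx, by omega⟩)
        · exact Or.inr (Or.inr ⟨by rw [hseg]; exact hx, by omega⟩)

theorem wcol_Snk_le
    (n k : ℕ) (hn : 2 ≤ n) (hk : 2 ≤ k) :
    wcol (Snk n k) (k - 1) ≤ k + 1 := by
  classical
  haveI : Nonempty (SnkV n k) := ⟨Sum.inl ⟨0, by omega⟩⟩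
  let L : LinearOrder (SnkV n k) := LinearOrder.lift' (gfun n k) (gfun_inj n k)
  have hb : ∀ y : SnkV n k, (WReach (Snk n k) L (k - 1) y).ncard ≤ k + 1 := by
    intro y
    rcases y with i | z
    · have hsub : WReach (Snk n k) L (k - 1) (Sum.inl i) ⊆ {Sum.inl i} := by
        rintro x ⟨p, hp, hlen, hm⟩
        have hinv := key hk p.reverse (by simpa using hlen)
          (fun z hz => hm z (by simpa using hz))
        have hx : x = Sum.inl i := hinv
        simp [hx]
      calc (WReach (Snk n k) L (k - 1) (Sum.inl i)).ncard
          ≤ ({Sum.inl i} : Set (SnkV n k)).ncard :=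
            Set.ncard_le_ncard hsub (Set.finite_singleton _)
        _ = 1 := Set.ncard_singleton _
        _ ≤ k + 1 := by omega
    · set T : Finset (SnkV n k) := insert (Sum.inl z.1.1.1) (insert (Sum.inl z.1.1.2)
        ((Finset.univ : Finset (Fin (k - 1))).image
          (fun s => (Sum.inr (z.1, s) : SnkV n k)))) with hT
      have hsub : WReach (Snk n k) L (k - 1) (Sum.inr z) ⊆ ↑T := by
        rintro x ⟨p, hp, hlen, hm⟩
        have hinv := key hk p.reverse (by simpa using hlen)
          (fun z' hz => hm z' (by simpa using hz))
        have hinv' : (∃ s, x = Sum.inr (z.1, s)) ∨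
            (x = Sum.inl z.1.1.1 ∧ (z.2 : ℕ) + 1 ≤ p.reverse.length) ∨
            (x = Sum.inl z.1.1.2 ∧ k - 1 ≤ p.reverse.length + (z.2 : ℕ)) := hinv
        rcases hinv' with ⟨s, hx⟩ | ⟨hx, -⟩ | ⟨hx, -⟩ <;> simp [hT, hx]
      have hcard : T.card ≤ k + 1 := by
        have h1 : ((Finset.univ : Finset (Fin (k - 1))).image
            (fun s => (Sum.inr (z.1, s) : SnkV n k))).card ≤ k - 1 :=
          le_trans Finset.card_image_le (by simp)
        calc T.card ≤ _ + 1 := Finset.card_insert_le _ _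
          _ ≤ (_ + 1) + 1 := by exact Nat.add_le_add_right (Finset.card_insert_le _ _) 1
          _ ≤ ((k - 1) + 1) + 1 := by exact Nat.add_le_add_right (Nat.add_le_add_right h1 1) 1
          _ ≤ k + 1 := by omega
      calc (WReach (Snk n k) L (k - 1) (Sum.inr z)).ncard
          ≤ (↑T : Set (SnkV n k)).ncard := Set.ncard_le_ncard hsub T.finite_toSet
        _ = T.card := Set.ncard_coe_finset T
        _ ≤ k + 1 := hcard
  have hle : wcol (Snk n k) (k - 1) ≤ ⨆ y, (WReach (Snk n k) L (k - 1) y).ncard := by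
    unfold wcol
    exact ciInf_le (OrderBot.bddBelow _) L
  exact le_trans hle (ciSup_le hb)
end

section
/- There exists a signed graph Ĝ whose underlying graph G has treewidth at most 2 such that the graph G ∪ (strong exact-distance -2 graph of Ĝ) is the complete graph K_7, and hence has chromatic number 7. -/
open SimpleGraph

/-!
Take an apex joined to two disjoint paths of length two. Any two non-adjacent vertices have a
common neighbour, and the signs can be chosen so that for every such pair one of these `2`-paths is
negative; so the graph together with its strong exact-distance `-2` graph is `K₇`. A star of bags,
with centre `{1, 4, 6}` and one bag per path edge plus the apex, is a tree decomposition of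
width two.
-/

namespace SimpleGraph

variable {V : Type}

lemma dist_eq_two_of_adj_of_adj {G : SimpleGraph V} {x y z : V} (hxy : x ≠ y)
    (hnadj : ¬ G.Adj x y) (hxz : G.Adj x z) (hzy : G.Adj z y) : G.dist x y = 2 := by
  have h : G.edist x y = 2 := edist_eq_two_iff.mpr ⟨hxy, hnadj, z, hxz, hzy.symm⟩
  simp [dist, h]

lemma isNegWalk_cons_cons_nil_iff {G : SimpleGraph V} (σ : Sym2 V → Bool) {x y z : V}
    (hxz : G.Adj x z) (hzy : G.Adj z y) :
    IsNegWalk σ (.cons hxz (.cons hzy .nil)) ↔ σ s(x, z) ≠ σ s(z, y) := by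
  unfold IsNegWalk negCount
  rcases h₁ : σ s(x, z) <;> rcases h₂ : σ s(z, y) <;> simp [h₁, h₂]

lemma strongExactDistNeg_two_adj_of_adj_of_adj {G : SimpleGraph V} {σ : Sym2 V → Bool}
    {x y z : V} (hxy : x ≠ y) (hnadj : ¬ G.Adj x y) (hxz : G.Adj x z) (hzy : G.Adj z y)
    (hσ : σ s(x, z) ≠ σ s(z, y)) : (strongExactDistNeg G σ 2).Adj x y := by
  refine ⟨hxy, .inl ⟨dist_eq_two_of_adj_of_adj hxy hnadj hxz hzy, .cons hxz (.cons hzy .nil),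
    ?_, rfl, (isNegWalk_cons_cons_nil_iff σ hxz hzy).mpr hσ⟩⟩
  simp [hxz.ne, hzy.ne, hxy]

lemma sup_strongExactDistNeg_two_eq_top {G : SimpleGraph V} {σ : Sym2 V → Bool}
    (h : ∀ x y, x ≠ y → ¬ G.Adj x y → ∃ z, G.Adj x z ∧ G.Adj z y ∧ σ s(x, z) ≠ σ s(z, y)) :
    G ⊔ strongExactDistNeg G σ 2 = ⊤ := by
  refine eq_top_iff.mpr fun x y hxy ↦ ?_
  by_cases hadj : G.Adj x y
  · exact .inl hadj
  · obtain ⟨z, hxz, hzy, hσ⟩ := h x y hxy hadj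
    exact .inr (strongExactDistNeg_two_adj_of_adj_of_adj hxy hadj hxz hzy hσ)

lemma starGraph_induce_connected_of_mem {ι : Type} {r : ι} {s : Set ι} (hr : r ∈ s) :
    ((starGraph r).induce s).Connected := by
  refine (connected_iff_exists_forall_reachable _).mpr ⟨⟨r, hr⟩, fun ⟨i, hi⟩ ↦ ?_⟩
  by_cases hri : r = i
  · subst hri; rfl
  · exact Adj.reachable (G := (starGraph r).induce s) (starGraph_center_adj hri)

end SimpleGraph

open SimpleGraph

lemma hasTreewidthLE_of_star_decomposition {V ι : Type} {G : SimpleGraph V} {t : ℕ} (r : ι)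
    (B : ι → Finset V) (hcover : ∀ v, ∃ i, v ∈ B i)
    (hedge : ∀ u v, G.Adj u v → ∃ i, u ∈ B i ∧ v ∈ B i)
    (hstar : ∀ v, v ∈ B r ∨ ∀ i j, v ∈ B i → v ∈ B j → i = j)
    (hcard : ∀ i, (B i).card ≤ t + 1) : HasTreewidthLE G t := by
  refine ⟨ι, starGraph r, B, connected_starGraph r, isAcyclic_starGraph r, hcover, hedge,
    fun v ↦ ?_, hcard⟩
  rcases hstar v with hr | hunique
  · exact starGraph_induce_connected_of_mem hr
  · obtain ⟨i, hi⟩ := hcover v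
    have : Nonempty {i | v ∈ B i} := ⟨⟨i, hi⟩⟩
    have : Subsingleton {i | v ∈ B i} := ⟨fun a b ↦ Subtype.ext (hunique _ _ a.2 b.2)⟩
    exact .of_subsingleton

/-- Vertices `0 - 1 - 2` and `3 - 4 - 5` form the paths `P₁` and `P₂`, and `6` is the apex. -/
def twoPathsApex : SimpleGraph (Fin 7) :=
  fromEdgeSet ↑({s(0, 1), s(1, 2), s(3, 4), s(4, 5),
    s(6, 0), s(6, 1), s(6, 2), s(6, 3), s(6, 4), s(6, 5)} : Finset (Sym2 (Fin 7)))

instance : DecidableRel twoPathsApex.Adj := inferInstanceAs (DecidableRel (fromEdgeSet _).Adj)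

/-- One edge of each path is negative, so the ends of a path are joined by a negative `2`-path
through its middle vertex; the apex is joined positively to `P₁` and negatively to `P₂`, so two
vertices on different paths are joined by a negative `2`-path through the apex. -/
def twoPathsApexSign (e : Sym2 (Fin 7)) : Bool :=
  e ∈ ({s(0, 1), s(3, 4), s(6, 3), s(6, 4), s(6, 5)} : Finset (Sym2 (Fin 7)))

lemma twoPathsApex_sup_strongExactDistNeg_two :
    twoPathsApex ⊔ strongExactDistNeg twoPathsApex twoPathsApexSign 2 = ⊤ :=
  sup_strongExactDistNeg_two_eq_top (by decide)

lemma twoPathsApex_hasTreewidthLE_two : HasTreewidthLE twoPathsApex 2 :=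
  hasTreewidthLE_of_star_decomposition 0
    ![{1, 4, 6}, {0, 1, 6}, {1, 2, 6}, {3, 4, 6}, {4, 5, 6}] (by decide) (by decide) (by decide)
    (by decide)

theorem exists_treewidth_two_union_strongExactDistNeg_complete_seven :
    ∃ (V : Type) (i : Fintype V) (G : SimpleGraph V) (σ : Sym2 V → Bool),
      HasTreewidthLE G 2 ∧ @Fintype.card V i = 7 ∧
      G ⊔ strongExactDistNeg G σ 2 = ⊤ ∧
      (G ⊔ strongExactDistNeg G σ 2).chromaticNumber = 7 := by
  refine ⟨Fin 7, inferInstance, twoPathsApex, twoPathsApexSign, twoPathsApex_hasTreewidthLE_two,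
    Fintype.card_fin 7, twoPathsApex_sup_strongExactDistNeg_two, ?_⟩
  rw [twoPathsApex_sup_strongExactDistNeg_two, chromaticNumber_top, Fintype.card_fin]
  rfl
end

section
/- For every signed graph (G,σ) whose underlying graph has an acyclic colouring with col_2(G) colours, the chromatic number of the strong exact-distance -2 graph of (G,σ) is at most col_2(G)·2^{col_2(G)-1}. -/
/-! An acyclic colouring makes the subgraph spanned by any two colour classes `i, j` a forest,
and on a forest every signature is switching equivalent to the all-positive one: some
`f i j : V → Bool` has `f i j u ⊕ f i j v = σ(uv)` along its edges.  Colour `v` by `C v` together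
with the values `f (C v) j v` for `j ≠ C v`.  If `a w b` is a negative path with `C a = C b`, both
of its edges lie in the forest of `C a, C w`, so `f (C a) (C w)` separates `a` and `b`. -/

open SimpleGraph

section NegCount

variable {V : Type} {G : SimpleGraph V} (σ : Sym2 V → Bool)

@[simp]
lemma negCount_nil {u : V} : negCount σ (Walk.nil : G.Walk u u) = 0 := rfl

lemma bodd_negCount_cons {u v w : V} (h : G.Adj u v) (p : G.Walk v w) :
    (negCount σ (Walk.cons h p)).bodd = xor (σ s(u, v)) (negCount σ p).bodd := by
  cases hσ : σ s(u, v) <;> simp [negCount, hσ]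

lemma bodd_negCount_append {u v w : V} (p : G.Walk u v) (q : G.Walk v w) :
    (negCount σ (p.append q)).bodd = xor (negCount σ p).bodd (negCount σ q).bodd := by
  simp [negCount, Walk.edges_append, List.filter_append]

lemma isNegWalk_iff_bodd {u v : V} (p : G.Walk u v) :
    IsNegWalk σ p ↔ (negCount σ p).bodd = true := by
  rw [IsNegWalk, Nat.odd_iff, Nat.mod_two_of_bodd]
  cases (negCount σ p).bodd <;> simp

lemma exists_adj_adj_xor_of_isNegWalk {a b : V} (p : G.Walk a b) (hlen : p.length = 2)
    (hneg : IsNegWalk σ p) :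
    ∃ w, G.Adj a w ∧ G.Adj w b ∧ xor (σ s(a, w)) (σ s(w, b)) = true := by
  rcases p with _ | ⟨haw, _ | ⟨hwb, _ | _⟩⟩ <;> simp at hlen
  refine ⟨_, haw, hwb, ?_⟩
  simpa [isNegWalk_iff_bodd, bodd_negCount_cons] using hneg

lemma exists_adj_adj_xor_of_adj_strongExactDistNeg_two {a b : V}
    (hab : (strongExactDistNeg G σ 2).Adj a b) :
    ∃ w, G.Adj a w ∧ G.Adj w b ∧ xor (σ s(a, w)) (σ s(w, b)) = true := by
  rcases hab with ⟨-, ⟨-, p, -, hlen, hneg⟩ | ⟨-, p, -, hlen, hneg⟩⟩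
  · exact exists_adj_adj_xor_of_isNegWalk σ p hlen hneg
  · obtain ⟨w, hbw, hwa, hxor⟩ := exists_adj_adj_xor_of_isNegWalk σ p hlen hneg
    refine ⟨w, hwa.symm, hbw.symm, ?_⟩
    rwa [Bool.xor_comm, Sym2.eq_swap (a := w), Sym2.eq_swap (a := a)]

end NegCount

namespace SimpleGraph

variable {V α : Type}

section Switching

variable {H : SimpleGraph V} (σ : Sym2 V → Bool)

theorem IsAcyclic.xor_bodd_negCount_of_adj (hH : H.IsAcyclic) {r u v : V} {p : H.Walk r u}
    {q : H.Walk r v} (hp : p.IsPath) (hq : q.IsPath) (h : H.Adj u v) :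
    xor (negCount σ p).bodd (negCount σ q).bodd = σ s(u, v) := by
  classical
  by_cases hv : v ∈ p.support
  · have htake : p.takeUntil v hv = q :=
      congrArg Subtype.val ((hH.subsingleton_path _ _).elim ⟨_, hp.takeUntil hv⟩ ⟨q, hq⟩)
    have hedge : (Walk.cons h.symm Walk.nil : H.Walk v u).IsPath := by simp [h.ne']
    have hdrop : p.dropUntil v hv = Walk.cons h.symm Walk.nil :=
      congrArg Subtype.val ((hH.subsingleton_path _ _).elim ⟨_, hp.dropUntil hv⟩ ⟨_, hedge⟩)
    rw [← p.take_spec hv, bodd_negCount_append, htake, hdrop, bodd_negCount_cons, Sym2.eq_swap]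
    cases σ s(u, v) <;> simp
  · have hconcat : p.concat h = q :=
      congrArg Subtype.val ((hH.subsingleton_path _ _).elim ⟨_, hp.concat hv h⟩ ⟨q, hq⟩)
    rw [← hconcat, Walk.concat_eq_append, bodd_negCount_append, bodd_negCount_cons]
    cases σ s(u, v) <;> simp

theorem IsAcyclic.exists_switching (hH : H.IsAcyclic) :
    ∃ f : V → Bool, ∀ u v, H.Adj u v → xor (f u) (f v) = σ s(u, v) := by
  classical
  have hreach (v : V) : H.Reachable (H.connectedComponentMk v).out v :=
    ConnectedComponent.exact (Quot.out_eq _)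
  refine ⟨fun v => (negCount σ (hreach v).some.toPath.1).bodd, fun u v h => ?_⟩
  have hc : H.connectedComponentMk u = H.connectedComponentMk v :=
    ConnectedComponent.sound h.reachable
  beta_reduce
  generalize (hreach u).some.toPath = pu
  generalize (hreach v).some.toPath = pv
  generalize H.connectedComponentMk u = c at pu hc
  subst hc
  exact hH.xor_bodd_negCount_of_adj σ pu.2 pv.2 h

variable {σ}

theorem ne_of_xor_eq_of_adj_adj {f : V → Bool}
    (hf : ∀ u v, H.Adj u v → xor (f u) (f v) = σ s(u, v)) {a w b : V} (haw : H.Adj a w)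
    (hwb : H.Adj w b) (hneg : xor (σ s(a, w)) (σ s(w, b)) = true) : f a ≠ f b := by
  rw [← hf a w haw, ← hf w b hwb] at hneg
  intro hab
  rw [hab] at hneg
  cases f w <;> cases f b <;> simp at hneg

end Switching

variable (G : SimpleGraph V)

def bicoloredSubgraph (C : V → α) (i j : α) : SimpleGraph V where
  Adj u v := G.Adj u v ∧ (C u = i ∨ C u = j) ∧ (C v = i ∨ C v = j)
  symm := ⟨fun _ _ h => ⟨h.1.symm, h.2.2, h.2.1⟩⟩
  loopless := ⟨fun v h => G.loopless.irrefl v h.1⟩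

theorem bicoloredSubgraph_le (C : V → α) (i j : α) : G.bicoloredSubgraph C i j ≤ G :=
  fun _ _ h => h.1

variable {G}

theorem isAcyclic_bicoloredSubgraph [DecidableEq α] {C : V → α}
    (hcycle : ∀ (v : V) (p : G.Walk v v), p.IsCycle → 3 ≤ (p.support.map C).toFinset.card)
    (i j : α) : (G.bicoloredSubgraph C i j).IsAcyclic := by
  intro v p hp
  have hcolors : (p.support.map C).toFinset ⊆ {i, j} := by
    intro c hc
    simp only [List.mem_toFinset, List.mem_map] at hc
    obtain ⟨z, hz, rfl⟩ := hc
    have hz : z ∈ p.support.tail := by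
      rcases p.mem_support_iff.mp hz with rfl | hz
      · exact p.end_mem_tail_support hp.not_nil
      · exact hz
    rw [← p.map_snd_darts, List.mem_map] at hz
    obtain ⟨d, -, rfl⟩ := hz
    simpa using d.adj.2.2
  have h3 := hcycle v (p.mapLe (G.bicoloredSubgraph_le C i j)) (hp.mapLe _)
  rw [Walk.support_mapLe_eq_support] at h3
  have h2 := (Finset.card_le_card hcolors).trans Finset.card_le_two
  omega

end SimpleGraph

theorem Fintype.card_sigma_subtype_ne_fun_bool (α : Type) [Fintype α] [DecidableEq α] :
    Fintype.card (Σ i : α, {j // j ≠ i} → Bool) =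
      Fintype.card α * 2 ^ (Fintype.card α - 1) := by
  simp [Fintype.card_sigma, Fintype.card_subtype_compl]

theorem colorable_strongExactDistNeg_two {V α : Type} [Fintype α] [DecidableEq α]
    {G : SimpleGraph V} (σ : Sym2 V → Bool) {C : V → α}
    (hproper : ∀ u v, G.Adj u v → C u ≠ C v)
    (hcycle : ∀ (v : V) (p : G.Walk v v), p.IsCycle → 3 ≤ (p.support.map C).toFinset.card) :
    (strongExactDistNeg G σ 2).Colorable (Fintype.card α * 2 ^ (Fintype.card α - 1)) := by
  choose F hF using fun i j => (isAcyclic_bicoloredSubgraph hcycle i j).exists_switching σ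
  let c : (strongExactDistNeg G σ 2).Coloring (Σ i : α, {j // j ≠ i} → Bool) :=
    Coloring.mk (fun v => ⟨C v, fun j => F (C v) j v⟩) fun {a b} hab heq => by
      obtain ⟨w, haw, hwb, hneg⟩ := exists_adj_adj_xor_of_adj_strongExactDistNeg_two σ hab
      have hCab : C a = C b := congrArg Sigma.fst heq
      rw [← hCab, Sigma.mk.inj_iff, heq_eq_eq] at heq
      exact ne_of_xor_eq_of_adj_adj (hF (C a) (C w)) ⟨haw, .inl rfl, .inr rfl⟩
        ⟨hwb, .inr rfl, .inl hCab.symm⟩ hneg (congrFun heq.2 ⟨C w, (hproper a w haw).symm⟩)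
  simpa [Fintype.card_sigma_subtype_ne_fun_bool] using c.colorable

theorem strongExactDistNeg_two_chromatic_le_of_acyclic_coloring_general
    {V : Type} (G : SimpleGraph V) (σ : Sym2 V → Bool)
    (hC : ∃ C : V → Fin (scol G 2),
      (∀ u v, G.Adj u v → C u ≠ C v) ∧
      ∀ (v : V) (p : G.Walk v v), p.IsCycle → 3 ≤ (p.support.map C).toFinset.card) :
    (strongExactDistNeg G σ 2).chromaticNumber ≤
      ((scol G 2 * 2 ^ (scol G 2 - 1) : ℕ) : ℕ∞) := by
  obtain ⟨C, hproper, hcycle⟩ := hC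
  simpa using (colorable_strongExactDistNeg_two σ hproper hcycle).chromaticNumber_le

theorem strongExactDistNeg_two_chromatic_le_of_acyclic_coloring
    {V : Type} [Fintype V] (G : SimpleGraph V) (σ : Sym2 V → Bool)
    (hC : ∃ C : V → Fin (scol G 2),
      (∀ u v, G.Adj u v → C u ≠ C v) ∧
      ∀ (v : V) (p : G.Walk v v), p.IsCycle → 3 ≤ (p.support.map C).toFinset.card) :
    (strongExactDistNeg G σ 2).chromaticNumber ≤
      ((scol G 2 * 2 ^ (scol G 2 - 1) : ℕ) : ℕ∞) :=
  strongExactDistNeg_two_chromatic_le_of_acyclic_coloring_general G σ hC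
end

section
/- For every t ≥ 1, there exists a signed graph Ĝ whose underlying graph has treewidth at most t such that the chromatic number of the strong exact-distance -2 graph of Ĝ is at least 2^t. -/
/-! Join a clique on `t` vertices to an independent set whose vertices are the `2 ^ t` sign
patterns `f : Fin t → Bool`, the edge between `f` and clique vertex `i` being negative iff `f i`.
Two distinct patterns are non-adjacent with a common neighbour, and they differ at some `i`, so
the path through `i` is a negative path of length 2: the patterns form a clique of the strong
exact-distance `-2` graph. A star-shaped tree decomposition with the clique in every bag and one
pattern added in each leaf bag shows that the treewidth is at most `t`. -/

open SimpleGraph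

namespace SimpleGraph

variable {V : Type}

theorem strongExactDistNeg_two_adj {G : SimpleGraph V} {σ : Sym2 V → Bool} {x y z : V}
    (hne : x ≠ y) (hxy : ¬G.Adj x y) (hxz : G.Adj x z) (hzy : G.Adj z y)
    (hσ : σ s(x, z) ≠ σ s(z, y)) :
    (strongExactDistNeg G σ 2).Adj x y := by
  let w : G.Walk x y := .cons hxz (.cons hzy .nil)
  have hdist : G.dist x y = 2 := by
    rw [dist, edist_eq_two_iff.mpr ⟨hne, hxy, z, hxz, hzy.symm⟩]
    rfl
  have hpath : w.IsPath := by
    simp [w, hne, hxz.ne, hzy.ne]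
  have hneg : IsNegWalk σ w := by
    simp only [IsNegWalk, negCount, w, Walk.edges_cons, Walk.edges_nil,
      List.filter_cons, List.filter_nil]
    revert hσ
    cases σ s(x, z) <;> cases σ s(z, y) <;> simp
  rw [strongExactDistNeg, fromRel_adj]
  exact ⟨hne, .inl ⟨hdist, w, hpath, rfl, hneg⟩⟩

theorem hasTreewidthLE_of_isIndepSet_compl {G : SimpleGraph V} {t : ℕ} (S : Finset V)
    (hS : S.card ≤ t) (hindep : G.IsIndepSet (↑S : Set V)ᶜ) : HasTreewidthLE G t := by
  classical
  let B : Option {v // v ∉ S} → Finset V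
    | none => S
    | some v => insert v.1 S
  have hSB : ∀ i, S ⊆ B i := by
    rintro (_ | v)
    · exact subset_rfl
    · exact Finset.subset_insert _ _
  have hB : ∀ v (hv : v ∉ S) i, v ∈ B i ↔ i = some ⟨v, hv⟩ := by
    rintro v hv (_ | ⟨u, hu⟩) <;> simp [B, hv, eq_comm]
  refine ⟨_, starGraph none, B, connected_starGraph _, isAcyclic_starGraph _, ?_, ?_, ?_, ?_⟩
  · intro v
    by_cases hv : v ∈ S
    · exact ⟨none, hv⟩
    · exact ⟨some ⟨v, hv⟩, (hB v hv _).mpr rfl⟩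
  · intro u v huv
    by_cases hu : u ∈ S
    · by_cases hv : v ∈ S
      · exact ⟨none, hu, hv⟩
      · exact ⟨some ⟨v, hv⟩, hSB (some _) hu, (hB v hv _).mpr rfl⟩
    · have hv : v ∈ S := by
        by_contra hv
        exact hindep hu hv huv.ne huv
      exact ⟨some ⟨u, hu⟩, (hB u hu _).mpr rfl, hSB (some _) hv⟩
  · intro v
    by_cases hv : v ∈ S
    · have hbags : {i | v ∈ B i} = Set.univ := Set.eq_univ_of_forall fun i => hSB i hv
      rw [hbags]
      exact (induceUnivIso _).connected_iff.mpr (connected_starGraph _)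
    · have hbags : {i | v ∈ B i} = {some ⟨v, hv⟩} := Set.ext fun i => hB v hv i
      rw [hbags, induce_singleton_eq_top]
      exact connected_top
  · rintro (_ | v)
    · exact hS.trans t.le_succ
    · exact (Finset.card_insert_le _ _).trans (Nat.succ_le_succ hS)

end SimpleGraph

def patternGraph (t : ℕ) : SimpleGraph (Fin t ⊕ (Fin t → Bool)) :=
  fromRel fun x _ => x.isLeft

def patternSign (t : ℕ) : Sym2 (Fin t ⊕ (Fin t → Bool)) → Bool :=
  Sym2.lift ⟨fun
    | .inl i, .inr f | .inr f, .inl i => f i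
    | _, _ => false,
    by rintro (_ | _) (_ | _) <;> rfl⟩

theorem patternGraph_adj_inl_inr {t : ℕ} (i : Fin t) (f : Fin t → Bool) :
    (patternGraph t).Adj (.inl i) (.inr f) := by
  simp [patternGraph]

theorem patternGraph_isIndepSet_range_inr (t : ℕ) :
    (patternGraph t).IsIndepSet (Set.range Sum.inr) := by
  rintro _ ⟨f, rfl⟩ _ ⟨g, rfl⟩ -
  simp [patternGraph]

theorem patternGraph_hasTreewidthLE (t : ℕ) : HasTreewidthLE (patternGraph t) t := by
  refine hasTreewidthLE_of_isIndepSet_compl (Finset.univ.map .inl) (by simp) ?_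
  simpa [Set.compl_range_inl] using patternGraph_isIndepSet_range_inr t

theorem strongExactDistNeg_patternGraph_adj_inr {t : ℕ} {f g : Fin t → Bool} (hfg : f ≠ g) :
    (strongExactDistNeg (patternGraph t) (patternSign t) 2).Adj (.inr f) (.inr g) := by
  obtain ⟨i, hi⟩ := Function.ne_iff.mp hfg
  exact strongExactDistNeg_two_adj (z := .inl i) (Sum.inr_injective.ne hfg)
    (patternGraph_isIndepSet_range_inr t ⟨f, rfl⟩ ⟨g, rfl⟩ (Sum.inr_injective.ne hfg))
    (patternGraph_adj_inl_inr i f).symm (patternGraph_adj_inl_inr i g) hi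

theorem exists_treewidth_t_strongExactDistNeg_chromatic_ge_two_pow_general
    (t : ℕ) :
    ∃ (V : Type) (_ : Fintype V) (G : SimpleGraph V) (σ : Sym2 V → Bool),
      HasTreewidthLE G t ∧
      ((2 ^ t : ℕ) : ℕ∞) ≤ (strongExactDistNeg G σ 2).chromaticNumber := by
  refine ⟨_, inferInstance, patternGraph t, patternSign t, patternGraph_hasTreewidthLE t, ?_⟩
  exact le_chromaticNumber_of_pairwise_adj (by simp) Sum.inr
    fun _ _ => strongExactDistNeg_patternGraph_adj_inr

theorem exists_treewidth_t_strongExactDistNeg_chromatic_ge_two_pow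
    (t : ℕ) (ht : 1 ≤ t) :
    ∃ (V : Type) (_ : Fintype V) (G : SimpleGraph V) (σ : Sym2 V → Bool),
      HasTreewidthLE G t ∧
      ((2 ^ t : ℕ) : ℕ∞) ≤ (strongExactDistNeg G σ 2).chromaticNumber :=
  exists_treewidth_t_strongExactDistNeg_chromatic_ge_two_pow_general t
end
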